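/- arXiv:1605.08266 — 3 statements merged into one kernel-verified Lean document; each statement's English description precedes it below -/
import Mathlib

section
/- Let G be a transitive permutation group on a finite set Ω with |Ω| = n ≥ 3, and let G_x be the stabilizer of a point x ∈ Ω. Then the number of primes p such that the cyclic group of order p is a composition factor of G but is NOT a composition factor of G_x is strictly less than log₂ n. -/
open Equiv

/-- `c` is a composition series of the group `G`, running from the trivial subgroup to `G`,
in which each term is normal in the next and there is no intermediate normal subgroup
(equivalently, each successive quotient is simple). -/
def IsCompositionChain {G : Type*} [Group G] {n : ℕ} (c : Fin (n + 1) → Subgroup G) : Prop :=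
  c 0 = ⊥ ∧ c (Fin.last n) = ⊤ ∧
    ∀ i : Fin n,
      c i.castSucc < c i.succ ∧
        ((c i.castSucc).subgroupOf (c i.succ)).Normal ∧
          ∀ K : Subgroup G, c i.castSucc < K → K ≤ c i.succ →
            (K.subgroupOf (c i.succ)).Normal → K = c i.succ

/-- The group `S` occurs as a composition factor of the group `G`: some composition series
of `G` has a step `c i ⊴ c (i+1)` whose quotient is isomorphic to `S` (expressed via a
surjective homomorphism from `c (i+1)` onto `S` with kernel `c i`). -/
def IsCompFactor (S : Type*) [Group S] (G : Type*) [Group G] : Prop :=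
  ∃ (n : ℕ) (c : Fin (n + 1) → Subgroup G), IsCompositionChain c ∧
    ∃ (i : Fin n) (f : ↥(c i.succ) →* S),
      Function.Surjective f ∧ f.ker = (c i.castSucc).subgroupOf (c i.succ)

/-- The cyclic group of (prime) order `p` occurs as a composition factor of `G`. -/
def HasCyclicCompFactor (G : Type*) [Group G] (p : ℕ) : Prop :=
  IsCompFactor (Multiplicative (ZMod p)) G

/-- The number of distinct primes `p` such that the cyclic group of order `p` occurs as a
composition factor of `G`; this is the number of isomorphism types of abelian composition
factors of `G`, i.e. `|Comp_A(G)|`. -/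
noncomputable def abelianCompFactorCount (G : Type*) [Group G] : ℕ :=
  {p : ℕ | p.Prime ∧ HasCyclicCompFactor G p}.ncard

/-- A permutation group `G ≤ Sym(Ω)` is transitive. -/
def IsTransitivePermGroup {Ω : Type*} (G : Subgroup (Equiv.Perm Ω)) : Prop :=
  ∀ a b : Ω, ∃ g ∈ G, g a = b

/-- `B` is a block for the permutation group `G ≤ Sym(Ω)`: every `g ∈ G` maps `B`
either onto itself or onto a set disjoint from `B`. -/
def IsBlockOf {Ω : Type*} (G : Subgroup (Equiv.Perm Ω)) (B : Set Ω) : Prop :=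
  ∀ g ∈ G, (g : Equiv.Perm Ω) '' B = B ∨ Disjoint ((g : Equiv.Perm Ω) '' B) B

/-- A permutation group `G ≤ Sym(Ω)` is primitive: it is transitive and all of its blocks
are trivial (subsingletons or all of `Ω`). -/
def IsPrimitivePermGroup {Ω : Type*} (G : Subgroup (Equiv.Perm Ω)) : Prop :=
  IsTransitivePermGroup G ∧ ∀ B : Set Ω, IsBlockOf G B → B.Subsingleton ∨ B = Set.univ

/-- The restriction homomorphism `H → Sym(Δ)` for a subgroup `H ≤ Sym(Ω)` leaving the
subset `Δ ⊆ Ω` invariant; its image is the permutation group `H^Δ` induced by `H` on `Δ`. -/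
def inducedPermHom {Ω : Type*} (H : Subgroup (Equiv.Perm Ω)) (Δ : Set Ω)
    (hinv : ∀ g ∈ H, ∀ a ∈ Δ, g a ∈ Δ) : ↥H →* Equiv.Perm ↥Δ where
  toFun g := Equiv.Perm.subtypePerm (g : Equiv.Perm Ω)
    (fun a => ⟨fun ha => by
      have h' := hinv _ (H.inv_mem g.2) _ ha
      simpa using h', fun ha => hinv g g.2 a ha⟩)
  map_one' := rfl
  map_mul' g₁ g₂ := rfl

/-!
The cyclic group of prime order `p` is a composition factor of a finite group `G` iff `G` has
a section `B / A` of order `p` with `B` subnormal. Such a section survives in every subgroup `H`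
of index prime to `p`: subnormality of `B` gives `|B : B ⊓ H| ∣ |G : H|`, so `p ∤ |B : B ⊓ H|`,
and then `|B ⊓ H : A ⊓ H| = p`. Hence every prime counted divides `n = |G : G_x|`, and `k`
distinct primes dividing `n ≥ 3` satisfy `2 ^ k < n`.
-/

open Subgroup

namespace Subgroup

variable {G : Type*} [Group G]

theorem relIndex_mul_index_sup [Finite G] (H K : Subgroup G) [K.Normal] :
    H.relIndex K * (H ⊔ K).index = H.index := by
  have hpos : 0 < K.relIndex H := Nat.pos_of_ne_zero index_ne_zero_of_finite
  refine Nat.eq_of_mul_eq_mul_left hpos ?_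
  calc K.relIndex H * (H.relIndex K * (H ⊔ K).index)
      = H.relIndex K * (K.relIndex (H ⊔ K) * (H ⊔ K).index) := by
        rw [relIndex_sup_right]; ring
    _ = (H ⊓ K).relIndex K * K.index := by
        rw [relIndex_mul_index le_sup_right, inf_relIndex_right]
    _ = (H ⊓ K).relIndex H * H.index := by
        rw [relIndex_mul_index inf_le_right, relIndex_mul_index inf_le_left]
    _ = K.relIndex H * H.index := by rw [inf_relIndex_left]

theorem IsSubnormal.relIndex_dvd_index [Finite G] {K : Subgroup G} (hK : K.IsSubnormal)
    (H : Subgroup G) : H.relIndex K ∣ H.index := by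
  induction hK with
  | top => rw [relIndex_top_right]
  | step K L hKL _ hN ih =>
    have := relIndex_mul_index_sup (H.subgroupOf L) (K.subgroupOf L)
    rw [relIndex_subgroupOf hKL] at this
    exact (Dvd.intro _ this).trans ih

theorem relIndex_inf_eq_of_not_dvd [Finite G] {A B : Subgroup G} (H : Subgroup G) (hAB : A ≤ B)
    (hp : (A.relIndex B).Prime) (hH : ¬ A.relIndex B ∣ H.relIndex B) :
    A.relIndex (H ⊓ B) = A.relIndex B := by
  have hdvd : A.relIndex B ∣ A.relIndex (H ⊓ B) * H.relIndex B := by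
    rw [relIndex_inf_mul_relIndex, ← relIndex_mul_relIndex _ _ _ inf_le_left hAB]
    exact dvd_mul_left _ _
  refine le_antisymm (relIndex_le_of_le_right inf_le_right hp.ne_zero) (Nat.le_of_dvd ?_ ?_)
  · exact Nat.pos_of_ne_zero index_ne_zero_of_finite
  · exact (hp.dvd_mul.mp hdvd).resolve_right hH

end Subgroup

theorem Nat.card_multiplicative_zmod (p : ℕ) : Nat.card (Multiplicative (ZMod p)) = p :=
  (Nat.card_congr Multiplicative.toAdd).trans (Nat.card_zmod p)

section

variable {G : Type*} [Group G]

variable (G) in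
def HasSubnormalSection (p : ℕ) : Prop :=
  ∃ A B : Subgroup G, A ≤ B ∧ (A.subgroupOf B).Normal ∧ B.IsSubnormal ∧ A.relIndex B = p

theorem HasSubnormalSection.comap {H : Type*} [Group H] [Finite G] {p : ℕ}
    (hp : p.Prime) (h : HasSubnormalSection G p) (φ : H →* G) (hφ : ¬ p ∣ φ.range.index) :
    HasSubnormalSection H p := by
  obtain ⟨A, B, hAB, hN, hB, rfl⟩ := h
  have hnorm : B ≤ normalizer (A : Set G) := (normal_subgroupOf_iff_le_normalizer hAB).mp hN
  refine ⟨A.comap φ, B.comap φ, comap_mono hAB,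
    (normal_subgroupOf_iff_le_normalizer (comap_mono hAB)).mpr
      ((comap_mono hnorm).trans (le_normalizer_comap φ)), hB.comap φ, ?_⟩
  rw [relIndex_comap, map_comap_eq]
  exact relIndex_inf_eq_of_not_dvd _ hAB hp fun hdvd => hφ (hdvd.trans (hB.relIndex_dvd_index _))

variable (G) in
def compositionStep : SetRel (Subgroup G) (Subgroup G) :=
  {XY | XY.1 < XY.2 ∧ (XY.1.subgroupOf XY.2).Normal ∧
    ∀ K : Subgroup G, XY.1 < K → K ≤ XY.2 → (K.subgroupOf XY.2).Normal → K = XY.2}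

theorem exists_relSeries_compositionStep_of_normal [Finite G] {X Y : Subgroup G}
    (hXY : X ≤ Y) (hN : (X.subgroupOf Y).Normal) :
    ∃ s : RelSeries (compositionStep G), s.head = X ∧ s.last = Y := by
  induction Y using WellFoundedLT.induction with
  | ind Y ih =>
  rcases hXY.eq_or_lt with rfl | hlt
  · exact ⟨RelSeries.singleton _ X, rfl, rfl⟩
  obtain ⟨M, ⟨hXM, hMY, hMN⟩, hmax⟩ := Set.Finite.exists_maximal
    (s := {M : Subgroup G | X ≤ M ∧ M < Y ∧ (M.subgroupOf Y).Normal}) (Set.toFinite _)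
    ⟨X, le_rfl, hlt, hN⟩
  have hXMN : (X.subgroupOf M).Normal := by
    rw [normal_subgroupOf_iff_le_normalizer hXM]
    exact hMY.le.trans ((normal_subgroupOf_iff_le_normalizer hXY).mp hN)
  obtain ⟨s, hs, hs'⟩ := ih M hMY hXM hXMN
  refine ⟨s.snoc Y (hs' ▸ ⟨hMY, hMN, fun K hMK hKY hKN => ?_⟩), by simpa using hs,
    RelSeries.last_snoc _ _ _⟩
  by_contra hKY'
  exact hMK.not_ge (hmax ⟨hXM.trans hMK.le, hKY.lt_of_ne hKY', hKN⟩ hMK.le)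

theorem Subgroup.IsSubnormal.exists_relSeries_compositionStep [Finite G]
    {B : Subgroup G} (hB : B.IsSubnormal) :
    ∃ s : RelSeries (compositionStep G), s.head = B ∧ s.last = ⊤ := by
  induction hB with
  | top => exact ⟨RelSeries.singleton _ ⊤, rfl, rfl⟩
  | step A B hAB _ hN ih =>
    obtain ⟨t, ht, ht'⟩ := ih
    obtain ⟨s, hs, hs'⟩ := exists_relSeries_compositionStep_of_normal hAB hN
    exact ⟨s.smash t (hs'.trans ht.symm), by simpa using hs, by simpa using ht'⟩

theorem compositionStep_of_relIndex_prime {A B : Subgroup G} (hAB : A ≤ B)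
    (hN : (A.subgroupOf B).Normal) (hp : (A.relIndex B).Prime) : (A, B) ∈ compositionStep G := by
  refine ⟨hAB.lt_of_ne fun h => ?_, hN, fun K (hAK : A < K) (hKB : K ≤ B) _ => ?_⟩
  · rw [h, relIndex_self] at hp
    exact Nat.not_prime_one hp
  have hmul := relIndex_mul_relIndex _ _ _ hAK.le hKB
  rcases hp.eq_one_or_self_of_dvd _ (Dvd.intro_left _ hmul) with h | h
  · exact hKB.antisymm (relIndex_eq_one.mp h)
  · rw [← h, Nat.mul_eq_right (h ▸ hp.ne_zero)] at hmul
    exact absurd (relIndex_eq_one.mp hmul) hAK.not_ge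

theorem exists_surjective_ker_eq_of_relIndex_eq {A B : Subgroup G} {p : ℕ}
    [Fact p.Prime] [(A.subgroupOf B).Normal] (hAB : A.relIndex B = p) :
    ∃ f : B →* Multiplicative (ZMod p), Function.Surjective f ∧ f.ker = A.subgroupOf B := by
  let e : B ⧸ A.subgroupOf B ≃* Multiplicative (ZMod p) :=
    mulEquivOfPrimeCardEq (by rw [← index_eq_card]; exact hAB) (Nat.card_multiplicative_zmod p)
  refine ⟨e.toMonoidHom.comp (QuotientGroup.mk' _),
    e.surjective.comp (QuotientGroup.mk'_surjective _), ?_⟩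
  ext g
  simp

theorem IsCompositionChain.isSubnormal {n : ℕ} {c : Fin (n + 1) → Subgroup G}
    (hc : IsCompositionChain c) (j : Fin (n + 1)) : (c j).IsSubnormal := by
  induction j using Fin.reverseInduction with
  | last => rw [hc.2.1]; exact .top
  | cast i ih => exact .step _ _ (hc.2.2 i).1.le ih (hc.2.2 i).2.1

theorem RelSeries.hasCyclicCompFactor {A B : Subgroup G} {p : ℕ}
    [Fact p.Prime] [(A.subgroupOf B).Normal] (hAB : A.relIndex B = p)
    (s : RelSeries (compositionStep G)) (hs : s.head = ⊥) (hs' : s.last = ⊤) (i : Fin s.length)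
    (hA : s i.castSucc = A) (hB : s i.succ = B) : HasCyclicCompFactor G p := by
  refine ⟨s.length, s, ⟨hs, hs', s.step⟩, i, ?_⟩
  rw [hA, hB]
  exact exists_surjective_ker_eq_of_relIndex_eq hAB

theorem hasCyclicCompFactor_iff [Finite G] {p : ℕ} (hp : p.Prime) :
    HasCyclicCompFactor G p ↔ HasSubnormalSection G p := by
  constructor
  · rintro ⟨n, c, hc, i, f, hf, hker⟩
    refine ⟨_, _, (hc.2.2 i).1.le, (hc.2.2 i).2.1, hc.isSubnormal _, ?_⟩
    rw [relIndex, ← hker, index_ker, MonoidHom.range_eq_top_of_surjective _ hf, card_top,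
      Nat.card_multiplicative_zmod]
  · rintro ⟨A, B, hAB, hN, hB, hAB'⟩
    have := Fact.mk hp
    obtain ⟨s, hs, hs'⟩ := exists_relSeries_compositionStep_of_normal bot_le (Y := A)
      (by rw [bot_subgroupOf]; infer_instance)
    obtain ⟨t, ht, ht'⟩ := hB.exists_relSeries_compositionStep
    let q := t.cons A (ht ▸ compositionStep_of_relIndex_prime hAB hN (hAB' ▸ hp))
    have hsq : s.last = q.head := by simp [q, hs']
    let i : Fin q.length := ⟨0, by simp [q]⟩
    exact (s.smash q hsq).hasCyclicCompFactor hAB' (by simpa using hs) (by simpa [q] using ht')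
      (i.natAdd s.length) ((RelSeries.smash_natAdd hsq i).trans (RelSeries.head_cons _ _ _))
      ((RelSeries.smash_succ_natAdd hsq i).trans ((RelSeries.cons_cast_succ t A _ 0).trans ht))

end

theorem Nat.two_pow_card_primeFactors_lt {n : ℕ} (hn : 3 ≤ n) :
    2 ^ n.primeFactors.card < n := by
  have hle : 2 ^ n.primeFactors.card ≤ n :=
    (Finset.pow_card_le_prod _ id 2 fun p hp => (Nat.prime_of_mem_primeFactors hp).two_le).trans
      (Nat.le_of_dvd (by omega) (Nat.prod_primeFactors_dvd n))
  refine hle.lt_of_ne fun heq => ?_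
  have hk : n.primeFactors.card ≠ 0 := fun h => by rw [h] at heq; omega
  have hpf : n.primeFactors = {2} := by rw [← heq, Nat.primeFactors_prime_pow hk Nat.prime_two]
  rw [hpf, Finset.card_singleton] at heq
  omega

theorem IsTransitivePermGroup.index_stabilizer {Ω : Type*} {G : Subgroup (Perm Ω)}
    (hG : IsTransitivePermGroup G) (x : Ω) :
    ((G ⊓ MulAction.stabilizer (Perm Ω) x).subgroupOf G).index = Nat.card Ω := by
  have : MulAction.IsPretransitive G Ω :=
    ⟨fun a b => let ⟨g, hg, h⟩ := hG a b; ⟨⟨g, hg⟩, h⟩⟩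
  rw [← MulAction.index_stabilizer_of_transitive G x]
  congr 1
  ext g
  simp [mem_subgroupOf, Subgroup.smul_def, Perm.smul_def]

theorem Set.ncard_lt_logb_two_of_subset_primeFactors {n : ℕ} (hn : 3 ≤ n) {S : Set ℕ}
    (hS : S ⊆ n.primeFactors) : (S.ncard : ℝ) < Real.logb 2 n := by
  have hcard : 2 ^ S.ncard < n :=
    (Nat.pow_le_pow_right two_pos ((ncard_le_ncard hS).trans (ncard_coe_finset _).le)).trans_lt
      (Nat.two_pow_card_primeFactors_lt hn)
  rw [Real.lt_logb_iff_rpow_lt one_lt_two (by positivity), Real.rpow_natCast]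
  exact_mod_cast hcard

/-- Proposition 3 of Pyber. Let `G` be a transitive permutation group on a
finite set `Ω` with `|Ω| = n ≥ 3` and let `G_x` be a point stabiliser. Then the number of
primes `p` such that the cyclic group of order `p` is a composition factor of `G` but not of
`G_x` is strictly less than `log₂ n`. -/
theorem compFactor_diff_lt_log {Ω : Type} [Fintype Ω] (G : Subgroup (Equiv.Perm Ω))
    (hn : 3 ≤ Fintype.card Ω) (htrans : IsTransitivePermGroup G) (x : Ω) :
    (({p : ℕ | p.Prime ∧ HasCyclicCompFactor ↥G p ∧
        ¬ HasCyclicCompFactor ↥(G ⊓ MulAction.stabilizer (Equiv.Perm Ω) x) p}).ncard : ℝ) <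
      Real.logb 2 (Fintype.card Ω) := by
  refine Set.ncard_lt_logb_two_of_subset_primeFactors hn ?_
  rintro p ⟨hp, hG, hGx⟩
  refine Nat.mem_primeFactors.mpr ⟨hp, by_contra fun hdvd => hGx ?_, by omega⟩
  rw [hasCyclicCompFactor_iff hp] at hG ⊢
  refine hG.comap hp (inclusion inf_le_left) ?_
  rwa [inclusion_range, htrans.index_stabilizer, Nat.card_eq_fintype_card]
end

section
/- (Jordan) Let G be a primitive permutation group on a finite set Ω, let x ∈ Ω and let G_x be the stabilizer of x. If a prime p divides |G_x|, then for every orbit Δ of G_x on Ω with |Δ| ≥ 2, p divides the order of the permutation group induced by G_x on Δ (i.e., the order of the image of the restriction homomorphism G_x → Sym(Δ)). -/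
open Equiv

/-! If `G_x^Δ` is a `p'`-group, every element of order `p` in `G_x` fixes the point `y ∈ Δ`, and
hence, by conjugating, every element of order `p` in `G` fixing `w` also fixes `z` whenever
`(w, z)` lies in the orbital of `(x, y)`. The orbital graph of a primitive group is connected,
so such an element fixes everything, and Cauchy's theorem gives a contradiction. -/

theorem MonoidHom.map_eq_one_of_pow_prime_eq_one {G H : Type*} [Group G] [Group H] (f : G →* H)
    {p : ℕ} (hp : p.Prime) (hndvd : ¬ p ∣ Nat.card f.range) {g : G} (hg : g ^ p = 1) :
    f g = 1 := by
  have hcop : p.gcd (Nat.card f.range) = 1 := (hp.coprime_iff_not_dvd).mpr hndvd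
  have h := (pow_gcd_eq_one (a := f.rangeRestrict g)).mpr
    ⟨by rw [← map_pow, hg, map_one], pow_card_eq_one'⟩
  rw [hcop, pow_one] at h
  exact congrArg Subtype.val h

section Orbital

variable {Ω : Type*} (G : Subgroup (Perm Ω))

def orbitalRel (x y w z : Ω) : Prop :=
  ∃ g ∈ G, g x = w ∧ g y = z

def orbitalComponent (x y w : Ω) : Set Ω :=
  {z | Relation.ReflTransGen (orbitalRel G x y) w z}

variable {G}

theorem orbitalRel_apply {x y w z : Ω} {g : Perm Ω} (hg : g ∈ G) (h : orbitalRel G x y w z) :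
    orbitalRel G x y (g w) (g z) := by
  obtain ⟨k, hk, rfl, rfl⟩ := h
  exact ⟨g * k, mul_mem hg hk, rfl, rfl⟩

theorem reflTransGen_orbitalRel_apply {x y w z : Ω} {g : Perm Ω} (hg : g ∈ G)
    (h : Relation.ReflTransGen (orbitalRel G x y) w z) :
    Relation.ReflTransGen (orbitalRel G x y) (g w) (g z) :=
  Relation.ReflTransGen.lift g (fun _ _ => orbitalRel_apply hg) _ _ h

theorem orbitalComponent_apply (x y w : Ω) {g : Perm Ω} (hg : g ∈ G) :
    orbitalComponent G x y (g w) = g '' orbitalComponent G x y w := by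
  ext z
  refine ⟨fun hz => ⟨g⁻¹ z, ?_, by simp⟩, ?_⟩
  · simpa [orbitalComponent] using reflTransGen_orbitalRel_apply (inv_mem hg) hz
  · rintro ⟨u, hu, rfl⟩
    exact reflTransGen_orbitalRel_apply hg hu

theorem ncard_orbitalComponent_eq (hG : IsTransitivePermGroup G) (x y w w' : Ω) :
    (orbitalComponent G x y w).ncard = (orbitalComponent G x y w').ncard := by
  obtain ⟨g, hg, rfl⟩ := hG w w'
  rw [orbitalComponent_apply x y w hg, Set.ncard_image_of_injective _ g.injective]

/-- On a finite set, reachability in the orbital graph of a transitive group is symmetric: the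
components all have the same size, and reachability can only shrink them. -/
theorem orbitalComponent_eq_of_mem [Finite Ω] (hG : IsTransitivePermGroup G) {x y w z : Ω}
    (hz : z ∈ orbitalComponent G x y w) :
    orbitalComponent G x y z = orbitalComponent G x y w :=
  Set.eq_of_subset_of_ncard_le (fun _ hu => Relation.ReflTransGen.trans hz hu)
    (ncard_orbitalComponent_eq hG x y w z).le (Set.toFinite _)

theorem isBlockOf_orbitalComponent [Finite Ω] (hG : IsTransitivePermGroup G) (x y w : Ω) :
    IsBlockOf G (orbitalComponent G x y w) := by
  intro g hg
  refine (em _).symm.imp (fun hnd => ?_) id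
  obtain ⟨u, hu, hu'⟩ := Set.not_disjoint_iff.mp hnd
  rw [← orbitalComponent_apply x y w hg] at hu ⊢
  rw [← orbitalComponent_eq_of_mem hG hu, orbitalComponent_eq_of_mem hG hu']

/-- One direction of Higman's criterion. -/
theorem IsPrimitivePermGroup.reflTransGen_orbitalRel [Finite Ω] (hG : IsPrimitivePermGroup G)
    {x y : Ω} (hxy : x ≠ y) (z : Ω) : Relation.ReflTransGen (orbitalRel G x y) x z := by
  have hy : y ∈ orbitalComponent G x y x := .single ⟨1, one_mem G, rfl, rfl⟩
  have hnt : ¬ (orbitalComponent G x y x).Subsingleton := fun h =>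
    hxy (h Relation.ReflTransGen.refl hy)
  have huniv := (hG.2 _ (isBlockOf_orbitalComponent hG.1 x y x)).resolve_left hnt
  exact (huniv.symm ▸ Set.mem_univ z : z ∈ orbitalComponent G x y x)

variable {x y : Ω} {n : ℕ}

theorem apply_eq_of_orbitalRel
    (hfix : ∀ τ ∈ G ⊓ MulAction.stabilizer (Perm Ω) x, τ ^ n = 1 → τ y = y)
    {s : Perm Ω} (hs : s ∈ G) (hsn : s ^ n = 1) {w z : Ω}
    (hw : s w = w) (hwz : orbitalRel G x y w z) : s z = z := by
  obtain ⟨g, hg, rfl, rfl⟩ := hwz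
  have hconj : g⁻¹ * s * g ∈ G ⊓ MulAction.stabilizer (Perm Ω) x := by
    refine Subgroup.mem_inf.mpr ⟨mul_mem (mul_mem (inv_mem hg) hs) hg, ?_⟩
    simp [MulAction.mem_stabilizer_iff, Perm.smul_def, Perm.mul_apply, hw]
  have hconjn : (g⁻¹ * s * g) ^ n = 1 := by
    simpa [hsn] using conj_pow (a := g⁻¹) (b := s) (i := n)
  have := hfix _ hconj hconjn
  rwa [Perm.mul_apply, Perm.mul_apply, Perm.inv_eq_iff_eq] at this

theorem IsPrimitivePermGroup.eq_one_of_pow_eq_one [Finite Ω] (hG : IsPrimitivePermGroup G)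
    (hxy : x ≠ y) (hfix : ∀ τ ∈ G ⊓ MulAction.stabilizer (Perm Ω) x, τ ^ n = 1 → τ y = y)
    {s : Perm Ω} (hs : s ∈ G ⊓ MulAction.stabilizer (Perm Ω) x) (hsn : s ^ n = 1) : s = 1 := by
  ext z
  induction hG.reflTransGen_orbitalRel hxy z with
  | refl => exact hs.2
  | tail _ hwz ih => exact apply_eq_of_orbitalRel hfix hs.1 hsn ih hwz

end Orbital

/-- Jordan. Let `G` be a primitive permutation group on a finite set `Ω`,
`x ∈ Ω` with stabiliser `G_x`, and let `p` be a prime dividing `|G_x|`. Then for every orbit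
`Δ` of `G_x` on `Ω` with `|Δ| ≥ 2`, `p` divides the order of the permutation group induced
by `G_x` on `Δ`. -/
theorem jordan_prime_dvd_induced {Ω : Type} [Fintype Ω] (G : Subgroup (Equiv.Perm Ω))
    (hprim : IsPrimitivePermGroup G) (x : Ω) (p : ℕ) (hp : p.Prime)
    (hdvd : p ∣ Nat.card ↥(G ⊓ MulAction.stabilizer (Equiv.Perm Ω) x))
    (Δ : Set Ω) (y : Ω)
    (hΔ : Δ = {z : Ω | ∃ g ∈ G ⊓ MulAction.stabilizer (Equiv.Perm Ω) x, g y = z})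
    (h2 : 2 ≤ Δ.ncard)
    (hinv : ∀ g ∈ G ⊓ MulAction.stabilizer (Equiv.Perm Ω) x, ∀ a ∈ Δ, g a ∈ Δ) :
    p ∣ Nat.card
      ↥((inducedPermHom (G ⊓ MulAction.stabilizer (Equiv.Perm Ω) x) Δ hinv).range) := by
  by_contra hndvd
  have hy : y ∈ Δ := hΔ ▸ ⟨1, one_mem _, rfl⟩
  have hxy : x ≠ y := by
    rintro rfl
    have hsub : Δ.Subsingleton := by
      rw [hΔ]
      rintro _ ⟨g, hg, rfl⟩ _ ⟨g', hg', rfl⟩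
      exact hg.2.trans hg'.2.symm
    have := Set.ncard_le_one_iff_subsingleton.mpr hsub
    omega
  have hfix : ∀ τ ∈ G ⊓ MulAction.stabilizer (Perm Ω) x, τ ^ p = 1 → τ y = y := by
    intro τ hτ hτp
    have hτΔ : inducedPermHom _ Δ hinv ⟨τ, hτ⟩ = 1 :=
      (inducedPermHom _ Δ hinv).map_eq_one_of_pow_prime_eq_one hp hndvd
        (Subtype.ext (by simpa using hτp))
    exact congrArg (fun σ : Perm Δ => (σ ⟨y, hy⟩ : Ω)) hτΔ
  have : Fact p.Prime := ⟨hp⟩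
  obtain ⟨σ, hσ⟩ := exists_prime_orderOf_dvd_card' p hdvd
  have hσp : σ ^ p = 1 := hσ ▸ pow_orderOf_eq_one σ
  have hσ1 : σ = 1 := Subtype.ext <|
    hprim.eq_one_of_pow_eq_one hxy hfix σ.2 (by rw [← Subgroup.coe_pow, hσp]; rfl)
  exact hp.ne_one (by rw [← hσ, hσ1, orderOf_one])
end

section
/- There is an absolute constant c > 0 such that for every sufficiently large k, the alternating group Alt(k) contains a cyclic subgroup whose order is the product of at least c·√(k/log₂ k) distinct primes. -/
open Equiv

/-!
By Chebyshev's bound there are about `m / log m` primes up to `m`. Taking `m ≈ √(k log k)`,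
some `≈ √(k / log k)` odd primes below `m` have sum at most `k`, so disjoint cycles of these
lengths fit into `k` points. The product of these cycles has odd order, hence is even, and
generates a cyclic subgroup of `Alt(k)` whose order is the product of the chosen primes.
-/

open Finset Real Filter
open scoped Nat.Prime

theorem Nat.pairwise_coprime_of_prime {P : Finset ℕ} (hP : ∀ p ∈ P, p.Prime) :
    Set.Pairwise (P : Set ℕ) Nat.Coprime := fun p hp q hq hpq =>
  (Nat.coprime_primes (hP p hp) (hP q hq)).2 hpq

theorem Nat.squarefree_prod_primes {P : Finset ℕ} (hP : ∀ p ∈ P, p.Prime) :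
    Squarefree (∏ p ∈ P, p) :=
  squarefree_prod_of_pairwise_isCoprime
    (fun _ hp _ hq hpq => Nat.coprime_iff_isRelPrime.1 (Nat.pairwise_coprime_of_prime hP hp hq hpq))
    fun p hp => (hP p hp).squarefree

section Permutations

variable {α : Type*} [Fintype α] [DecidableEq α]

theorem Equiv.Perm.exists_orderOf_eq_prod_primes {P : Finset ℕ} (hP : ∀ p ∈ P, p.Prime)
    (hsum : ∑ p ∈ P, p ≤ Fintype.card α) : ∃ g : Perm α, orderOf g = ∏ p ∈ P, p := by
  obtain ⟨g, hg⟩ := (Perm.exists_with_cycleType_iff α (m := P.val)).2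
    ⟨(sum_val P).trans_le hsum, fun p hp => (hP p hp).two_le⟩
  refine ⟨g, ?_⟩
  rw [← Perm.lcm_cycleType, hg, ← lcm_eq_prod (Nat.pairwise_coprime_of_prime hP)]
  simp [lcm_def]

theorem Equiv.Perm.mem_alternatingGroup_of_odd_orderOf {g : Perm α} (hg : Odd (orderOf g)) :
    g ∈ alternatingGroup α := by
  have h2 : orderOf (Perm.sign g) ∣ 2 := orderOf_dvd_of_pow_eq_one (Int.units_sq _)
  have hodd : Odd (orderOf (Perm.sign g)) := hg.of_dvd_nat (orderOf_map_dvd _ g)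
  exact orderOf_eq_one_iff.1 (hodd.coprime_two_right.eq_one_of_dvd h2)

theorem exists_isCyclic_subgroup_alternatingGroup_card_eq_prod {P : Finset ℕ}
    (hP : ∀ p ∈ P, p.Prime ∧ p ≠ 2) (hsum : ∑ p ∈ P, p ≤ Fintype.card α) :
    ∃ H : Subgroup (alternatingGroup α), IsCyclic H ∧ Nat.card H = ∏ p ∈ P, p := by
  obtain ⟨g, hg⟩ := Perm.exists_orderOf_eq_prod_primes (fun p hp => (hP p hp).1) hsum
  have hodd : Odd (orderOf g) := by
    rw [hg, ← Nat.not_even_iff_odd, even_iff_two_dvd, Nat.prime_two.prime.dvd_finsetProd_iff]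
    rintro ⟨p, hp, h2p⟩
    exact (hP p hp).2 ((Nat.prime_dvd_prime_iff_eq Nat.prime_two (hP p hp).1).1 h2p).symm
  let a : alternatingGroup α := ⟨g, Perm.mem_alternatingGroup_of_odd_orderOf hodd⟩
  exact ⟨Subgroup.zpowers a, inferInstance, by rw [Nat.card_zpowers, Subgroup.orderOf_mk, hg]⟩

end Permutations

theorem Nat.succ_sq_le_two_pow {n : ℕ} (hn : 6 ≤ n) : (n + 1) ^ 2 ≤ 2 ^ n := by
  induction n, hn using Nat.le_induction with
  | base => norm_num
  | succ n hn ih => rw [pow_succ 2 n]; nlinarith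

theorem div_two_mul_logb_le_primeCounting {n : ℕ} (hn : 6 ≤ n) :
    n / (2 * logb 2 n) ≤ π n := by
  have hn1 : (1 : ℝ) < n := by exact_mod_cast (by omega : 1 < n)
  have hlog : 2 * log (n + 1) ≤ n * log 2 := by
    have := log_le_log (by positivity) (by exact_mod_cast Nat.succ_sq_le_two_pow hn :
      ((n : ℝ) + 1) ^ 2 ≤ 2 ^ n)
    rwa [log_pow, log_pow, Nat.cast_ofNat] at this
  refine le_trans ?_ (Chebyshev.pi_ge n)
  rw [logb, mul_div_assoc', div_div_eq_mul_div,
    div_le_div_iff₀ (by positivity [log_pos hn1]) (log_pos hn1)]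
  nlinarith [log_pos hn1, log_pos one_lt_two]

theorem exists_odd_primes_card_eq_sum_le {m s : ℕ} (hs : s + 1 ≤ π m) :
    ∃ P : Finset ℕ, (∀ p ∈ P, p.Prime ∧ p ≠ 2) ∧ #P = s ∧
      ∑ p ∈ P, p ≤ s * m := by
  have hcard : s ≤ #((Nat.primesLE m).erase 2) := by
    have := pred_card_le_card_erase (s := Nat.primesLE m) (a := 2)
    rw [Nat.primesLE_card_eq_primeCounting] at this
    omega
  obtain ⟨P, hPsub, rfl⟩ := exists_subset_card_eq hcard
  have hmem : ∀ p ∈ P, p ≠ 2 ∧ p ≤ m ∧ p.Prime := fun p hp => by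
    simpa [Nat.mem_primesLE] using hPsub hp
  refine ⟨P, fun p hp => ⟨(hmem p hp).2.2, (hmem p hp).1⟩, rfl, ?_⟩
  simpa using sum_le_card_nsmul P id m fun p hp => (hmem p hp).2.1

theorem sqrt_mul_eq_sqrt_div_mul {x L : ℝ} (hL : 0 < L) : √(x * L) = √(x / L) * L := by
  rw [show x * L = x / L * L ^ 2 by field_simp, sqrt_mul' _ (sq_nonneg L), sqrt_sq hL.le]

theorem sqrt_div_mul_sqrt_mul {x L : ℝ} (hx : 0 ≤ x) (hL : 0 < L) :
    √(x / L) * √(x * L) = x := by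
  rw [← sqrt_mul (div_nonneg hx hL.le), show x / L * (x * L) = x ^ 2 by field_simp, sqrt_sq hx]

theorem exists_odd_primes_sum_le {k : ℕ} (hk : 2 ≤ k) (hlog : 256 * logb 2 k ≤ k) :
    ∃ P : Finset ℕ, (∀ p ∈ P, p.Prime ∧ p ≠ 2) ∧ ∑ p ∈ P, p ≤ k ∧
      √(k / logb 2 k) / 16 ≤ #P := by
  set L := logb 2 (k : ℝ)
  set u := √(k / L)
  set v := √(k * L)
  have hk2 : (2 : ℝ) ≤ k := by exact_mod_cast hk
  have hL : 1 ≤ L := by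
    rw [Real.le_logb_iff_rpow_le one_lt_two (by positivity)]; simpa using hk2
  have hu : 16 ≤ u := (le_sqrt' (by norm_num)).2 (by rw [le_div_iff₀ (by linarith)]; linarith)
  have hvu : v = u * L := sqrt_mul_eq_sqrt_div_mul (by linarith)
  have huv : u * v = k := sqrt_div_mul_sqrt_mul (by positivity) (by linarith)
  set m := ⌊v⌋₊
  have hvm : v < m + 1 := Nat.lt_floor_add_one v
  have hmv : (m : ℝ) ≤ v := Nat.floor_le (by positivity)
  have hm6 : 6 ≤ m := Nat.le_floor (by push_cast; nlinarith)
  have hmL : logb 2 m ≤ L := logb_le_logb_of_le one_lt_two (by positivity) (by nlinarith)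
  have hπ : u / 4 ≤ π m := by
    refine le_trans ?_ (div_two_mul_logb_le_primeCounting hm6)
    have hlogm : 0 < logb 2 (m : ℝ) := logb_pos one_lt_two (by exact_mod_cast (by omega : 1 < m))
    rw [div_le_div_iff₀ (by norm_num) (by positivity)]
    nlinarith
  set s := ⌊u / 8⌋₊
  have hsu : (s : ℝ) ≤ u / 8 := Nat.floor_le (by positivity)
  obtain ⟨P, hP, hPs, hsum⟩ := exists_odd_primes_card_eq_sum_le (m := m) (s := s)
    (by exact_mod_cast (by linarith : (s : ℝ) + 1 ≤ π m))
  refine ⟨P, hP, ?_, ?_⟩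
  · have : ((s * m : ℕ) : ℝ) ≤ k := by push_cast; nlinarith
    exact hsum.trans (by exact_mod_cast this)
  · rw [hPs]
    have := Nat.lt_floor_add_one (u / 8)
    linarith

theorem eventually_mul_logb_le {b c : ℝ} (hb : 1 < b) (hc : 0 < c) :
    ∀ᶠ x : ℝ in atTop, c * logb b x ≤ x := by
  have hlogb := log_pos hb
  filter_upwards [isLittleO_log_id_atTop.bound (div_pos hlogb hc), eventually_ge_atTop 0]
    with x hx hx0
  rw [norm_eq_abs, id, norm_of_nonneg hx0] at hx
  rw [logb, mul_div_assoc', div_le_iff₀ hlogb]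
  rw [div_mul_eq_mul_div, le_div_iff₀ hc] at hx
  nlinarith [le_abs_self (log x)]

/-- There is an absolute constant `c > 0` such that for every sufficiently
large `k`, the alternating group `Alt(k)` contains a cyclic subgroup whose order is a
product of at least `c·√(k / log₂ k)` distinct primes. -/
theorem alternating_contains_cyclic_many_primes :
    ∃ c : ℝ, 0 < c ∧ ∃ k₀ : ℕ, ∀ k : ℕ, k₀ ≤ k →
      ∃ H : Subgroup ↥(alternatingGroup (Fin k)), IsCyclic ↥H ∧
        Squarefree (Nat.card ↥H) ∧
        c * Real.sqrt ((k : ℝ) / Real.logb 2 (k : ℝ)) ≤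
          ((Nat.card ↥H).primeFactors.card : ℝ) := by
  have hlog : ∀ᶠ k : ℕ in atTop, 256 * logb 2 k ≤ k :=
    tendsto_natCast_atTop_atTop.eventually (eventually_mul_logb_le one_lt_two (by norm_num))
  obtain ⟨k₀, hk₀⟩ := eventually_atTop.1 ((eventually_ge_atTop 2).and hlog)
  refine ⟨1 / 16, by norm_num, k₀, fun k hk => ?_⟩
  obtain ⟨hk2, hklog⟩ := hk₀ k hk
  obtain ⟨P, hP, hsum, hcard⟩ := exists_odd_primes_sum_le hk2 hklog
  obtain ⟨H, hcyc, hH⟩ :=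
    exists_isCyclic_subgroup_alternatingGroup_card_eq_prod (α := Fin k) hP (by simpa using hsum)
  have hprime : ∀ p ∈ P, p.Prime := fun p hp => (hP p hp).1
  refine ⟨H, hcyc, hH ▸ Nat.squarefree_prod_primes hprime, ?_⟩
  rw [hH, Nat.primeFactors_prod hprime]
  linarith
end
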